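/- Let K ⊆ ℝ^n be a nonempty compact convex set with support function f(w) = sup_{u ∈ K} ⟨w, u⟩, let ε > 0, η > 0 and t ∈ ℝ^n. Then the proximal problem for the conjugate g*(s) = ε · min_{u ∈ K} ‖s − u‖₁ satisfies the duality identity min_{s ∈ ℝ^n} ( ε · min_{u ∈ K} ‖s − u‖₁ + (1/(2η))‖s − t‖₂² ) = max_{w ∈ [−ε, ε]^n} ( − f(w) + ⟨w, t⟩ − (η/2)‖w‖₂² ), and both the minimum and the maximum are attained. -/

import Mathlib

/-!
Write `Φ(u, w) = ⟨w, t - u⟩ - (η/2)‖w‖²`. The dual objective is `min_{u ∈ K} Φ(u, w)`, and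
`Φ(u, ·)` is maximised over the box by the coordinatewise clip `w(u)` of `(t - u)/η`, which is
continuous in `u`. Let `u₀` minimise `ψ(u) = Φ(u, w(u))` over the compact set `K`. Comparing `ψ`
along segments from `u₀` and letting the step tend to `0` shows that `w₀ = w(u₀)` maximises
`⟨w₀, ·⟩` on `K`, so `(u₀, w₀)` is a saddle point of `Φ` on `K × box`. Hence `ψ(u₀)` is the dual
optimum, attained at `w₀`; weak duality is the coordinatewise Fenchel–Young inequality
`w a - (η/2) w² ≤ ε |v| + (v - a)²/(2η)`, with equality for `s₀ = t - η w₀` and `u = u₀`.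
-/

open Finset Filter Topology Matrix

noncomputable def clip (ε x : ℝ) : ℝ := max (-ε) (min ε x)

section Clip

variable {ε η : ℝ}

@[fun_prop]
lemma continuous_clip : Continuous (clip ε) := by
  unfold clip; fun_prop

lemma abs_clip_le (hε : 0 ≤ ε) (x : ℝ) : |clip ε x| ≤ ε := by
  rw [abs_le, clip]
  exact ⟨le_max_left _ _, max_le (by linarith) (min_le_left _ _)⟩

lemma abs_clip_sub_le {w : ℝ} (hw : |w| ≤ ε) (x : ℝ) : |clip ε x - x| ≤ |w - x| := by
  rw [abs_le] at hw
  have := neg_le_abs (w - x)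
  have := le_abs_self (w - x)
  unfold clip
  rw [abs_le, min_def, max_def]
  split_ifs <;> constructor <;> linarith

lemma mul_abs_sub_clip (hε : 0 ≤ ε) (x : ℝ) :
    ε * |x - clip ε x| = clip ε x * (x - clip ε x) := by
  rcases le_total x (-ε) with h | h
  · have : clip ε x = -ε := by unfold clip; rw [min_eq_right (by linarith), max_eq_left h]
    rw [this, abs_of_nonpos (by linarith)]; ring
  rcases le_total x ε with h' | h'
  · have : clip ε x = x := by unfold clip; rw [min_eq_right h', max_eq_right h]
    simp [this]
  · have : clip ε x = ε := by unfold clip; rw [min_eq_left h', max_eq_right (by linarith)]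
    rw [this, abs_of_nonneg (by linarith)]

lemma mul_sub_sq_le_clip (hη : 0 < η) {w : ℝ} (hw : |w| ≤ ε) (a : ℝ) :
    w * a - η / 2 * w ^ 2 ≤ clip ε (a / η) * a - η / 2 * clip ε (a / η) ^ 2 := by
  obtain ⟨x, rfl⟩ : ∃ x, a = η * x := ⟨a / η, by field_simp⟩
  rw [mul_div_cancel_left₀ x hη.ne']
  have hsq : (clip ε x - x) ^ 2 ≤ (w - x) ^ 2 := sq_le_sq.mpr (abs_clip_sub_le hw x)
  nlinarith [mul_le_mul_of_nonneg_left hsq hη.le]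

lemma mul_sub_sq_le_mul_abs_add_sq (hη : 0 < η) {w : ℝ} (hw : |w| ≤ ε) (a v : ℝ) :
    w * a - η / 2 * w ^ 2 ≤ ε * |v| + 1 / (2 * η) * (v - a) ^ 2 := by
  have hv : w * v ≤ ε * |v| :=
    (le_abs_self _).trans ((abs_mul w v).trans_le (mul_le_mul_of_nonneg_right hw (abs_nonneg v)))
  have hsq : 0 ≤ 1 / (2 * η) * (a - v - η * w) ^ 2 := by positivity
  have hexp : 1 / (2 * η) * (a - v - η * w) ^ 2
      = 1 / (2 * η) * (v - a) ^ 2 - w * (a - v) + η / 2 * w ^ 2 := by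
    field_simp; ring
  linarith

lemma mul_abs_sub_clip_add_sq (hε : 0 ≤ ε) (hη : 0 < η) (a : ℝ) :
    ε * |a - η * clip ε (a / η)| + 1 / (2 * η) * (η * clip ε (a / η)) ^ 2
      = clip ε (a / η) * a - η / 2 * clip ε (a / η) ^ 2 := by
  obtain ⟨x, rfl⟩ : ∃ x, a = η * x := ⟨a / η, by field_simp⟩
  rw [mul_div_cancel_left₀ x hη.ne']
  have h := mul_abs_sub_clip hε x
  rw [← mul_sub, abs_mul, abs_of_pos hη]
  field_simp
  linear_combination 2 * h

end Clip

section Lagrangian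

variable {ι : Type*} {ε η : ℝ} {t : ι → ℝ}

noncomputable def bestResponse (ε η : ℝ) (t u : ι → ℝ) : ι → ℝ := fun j => clip ε ((t j - u j) / η)

lemma abs_bestResponse_le (hε : 0 ≤ ε) (u : ι → ℝ) (j : ι) : |bestResponse ε η t u j| ≤ ε :=
  abs_clip_le hε _

@[fun_prop]
lemma continuous_bestResponse : Continuous (bestResponse ε η t) := by
  unfold bestResponse; fun_prop

variable [Fintype ι]

noncomputable def lagrangian (η : ℝ) (t u w : ι → ℝ) : ℝ :=
  ∑ j, (w j * (t j - u j) - η / 2 * w j ^ 2)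

noncomputable def maxLagrangian (ε η : ℝ) (t u : ι → ℝ) : ℝ :=
  lagrangian η t u (bestResponse ε η t u)

lemma lagrangian_eq (u w : ι → ℝ) :
    lagrangian η t u w = w ⬝ᵥ t - w ⬝ᵥ u - η / 2 * ∑ j, w j ^ 2 := by
  simp only [lagrangian, dotProduct, mul_sum, ← sum_sub_distrib]
  exact sum_congr rfl fun j _ => by ring

lemma lagrangian_le_maxLagrangian (hη : 0 < η) {w : ι → ℝ} (hw : ∀ j, |w j| ≤ ε) (u : ι → ℝ) :
    lagrangian η t u w ≤ maxLagrangian ε η t u :=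
  sum_le_sum fun j _ => mul_sub_sq_le_clip hη (hw j) _

lemma lagrangian_le_l1_add_sq (hη : 0 < η) {w : ι → ℝ} (hw : ∀ j, |w j| ≤ ε) (s u : ι → ℝ) :
    lagrangian η t u w ≤ ε * ∑ j, |s j - u j| + 1 / (2 * η) * ∑ j, (s j - t j) ^ 2 := by
  rw [mul_sum, mul_sum, ← sum_add_distrib]
  refine sum_le_sum fun j _ => ?_
  simpa only [sub_sub_sub_cancel_right] using
    mul_sub_sq_le_mul_abs_add_sq hη (hw j) (t j - u j) (s j - u j)

lemma continuous_maxLagrangian : Continuous (maxLagrangian ε η t) := by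
  unfold maxLagrangian lagrangian; fun_prop

lemma bestResponse_dotProduct_le_of_isMinOn {K : Set (ι → ℝ)} (hK : Convex ℝ K) (hε : 0 ≤ ε)
    (hη : 0 < η) {u₀ u : ι → ℝ} (hu₀ : u₀ ∈ K) (hmin : IsMinOn (maxLagrangian ε η t) K u₀)
    (hu : u ∈ K) :
    bestResponse ε η t u₀ ⬝ᵥ u ≤ bestResponse ε η t u₀ ⬝ᵥ u₀ := by
  set d := u - u₀
  set g : ℝ → ℝ := fun τ => bestResponse ε η t (u₀ + τ • d) ⬝ᵥ d
  have hg : ∀ τ ∈ Set.Ioo (0 : ℝ) 1, g τ ≤ 0 := by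
    rintro τ ⟨hτ₀, hτ₁⟩
    have hmem : u₀ + τ • d ∈ K := hK.add_smul_sub_mem hu₀ hu ⟨hτ₀.le, hτ₁.le⟩
    -- `w(u₀ + τ d)` is feasible for `u₀`, so minimality of `ψ` at `u₀` forces `τ g τ ≤ 0`
    have hshift : maxLagrangian ε η t (u₀ + τ • d)
        = lagrangian η t u₀ (bestResponse ε η t (u₀ + τ • d)) - τ * g τ := by
      simp only [maxLagrangian, lagrangian_eq, g, dotProduct_add, dotProduct_smul, smul_eq_mul]
      ring
    have hle : lagrangian η t u₀ (bestResponse ε η t (u₀ + τ • d)) ≤ maxLagrangian ε η t u₀ :=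
      lagrangian_le_maxLagrangian hη (abs_bestResponse_le hε _) u₀
    have hmin' : maxLagrangian ε η t u₀ ≤ maxLagrangian ε η t (u₀ + τ • d) := hmin hmem
    nlinarith
  have hlim : Tendsto g (𝓝[>] 0) (𝓝 (g 0)) :=
    ((by fun_prop : Continuous g).tendsto 0).mono_left nhdsWithin_le_nhds
  have := le_of_tendsto hlim (eventually_of_mem (Ioo_mem_nhdsGT one_pos) hg)
  simpa [g, d, dotProduct_sub] using this

end Lagrangian

section Duality

variable {ι : Type*} [Fintype ι] {K : Set (ι → ℝ)} {ε η : ℝ} {t u₀ w : ι → ℝ}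

lemma dotProduct_le_csSup (hK : IsCompact K) {u : ι → ℝ} (hu : u ∈ K) :
    w ⬝ᵥ u ≤ sSup {x | ∃ u ∈ K, x = w ⬝ᵥ u} := by
  obtain ⟨v, -, hv⟩ := hK.exists_isMaxOn ⟨u, hu⟩ (f := (w ⬝ᵥ ·)) (by fun_prop)
  exact le_csSup ⟨w ⬝ᵥ v, by rintro _ ⟨u, hu, rfl⟩; exact hv hu⟩ ⟨u, hu, rfl⟩

lemma csSup_dotProduct_eq (hu₀ : u₀ ∈ K) (h : ∀ u ∈ K, w ⬝ᵥ u ≤ w ⬝ᵥ u₀) :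
    sSup {x | ∃ u ∈ K, x = w ⬝ᵥ u} = w ⬝ᵥ u₀ :=
  IsGreatest.csSup_eq ⟨⟨u₀, hu₀, rfl⟩, by rintro _ ⟨u, hu, rfl⟩; exact h u hu⟩

lemma lagrangian_le_primal (hε : 0 < ε) (hη : 0 < η) (hu₀ : u₀ ∈ K) (hw : ∀ j, |w j| ≤ ε)
    (h : ∀ u ∈ K, w ⬝ᵥ u ≤ w ⬝ᵥ u₀) (s : ι → ℝ) :
    lagrangian η t u₀ w ≤ ε * sInf {d | ∃ u ∈ K, d = ∑ j, |s j - u j|}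
      + 1 / (2 * η) * ∑ j, (s j - t j) ^ 2 := by
  set q := 1 / (2 * η) * ∑ j, (s j - t j) ^ 2
  have hweak : ∀ u ∈ K, lagrangian η t u₀ w - q ≤ ε * ∑ j, |s j - u j| := by
    intro u hu
    have hu_le := lagrangian_le_l1_add_sq hη hw s u (t := t)
    have hwu := h u hu
    rw [lagrangian_eq] at hu_le ⊢
    linarith
  have : (lagrangian η t u₀ w - q) / ε ≤ sInf {d | ∃ u ∈ K, d = ∑ j, |s j - u j|} :=
    le_csInf ⟨_, u₀, hu₀, rfl⟩ fun _ ⟨u, hu, hd⟩ => by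
      rw [hd, div_le_iff₀' hε]; exact hweak u hu
  rw [div_le_iff₀' hε] at this
  linarith

lemma primal_le_maxLagrangian (hε : 0 ≤ ε) (hη : 0 < η) (hu₀ : u₀ ∈ K) :
    ε * sInf {d | ∃ u ∈ K, d = ∑ j, |(t - η • bestResponse ε η t u₀) j - u j|}
      + 1 / (2 * η) * ∑ j, ((t - η • bestResponse ε η t u₀) j - t j) ^ 2
      ≤ maxLagrangian ε η t u₀ := by
  set s₀ := t - η • bestResponse ε η t u₀
  have hinf : sInf {d | ∃ u ∈ K, d = ∑ j, |s₀ j - u j|} ≤ ∑ j, |s₀ j - u₀ j| :=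
    csInf_le ⟨0, by rintro _ ⟨u, -, rfl⟩; positivity⟩ ⟨u₀, hu₀, rfl⟩
  refine (add_le_add_left (mul_le_mul_of_nonneg_left hinf hε) _).trans_eq ?_
  rw [mul_sum, mul_sum, ← sum_add_distrib, maxLagrangian, lagrangian]
  refine sum_congr rfl fun j _ => ?_
  convert mul_abs_sub_clip_add_sq hε hη (t j - u₀ j) using 3
  all_goals simp only [s₀, bestResponse, Pi.sub_apply, Pi.smul_apply, smul_eq_mul]
  · rw [sub_right_comm]
  · ring

end Duality

/-- Duality for the proximal problem of
`g*(s) = ε · min_{u ∈ K} ‖s − u‖₁`: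
`min_s ( g*(s) + (1/(2η))‖s − t‖₂² ) = max_{w ∈ [−ε,ε]ⁿ} ( −f(w) + ⟨w,t⟩ − (η/2)‖w‖₂² )`,
with both optima attained, where `f` is the support function of the nonempty
compact convex set `K`. -/
theorem stmt10 (n : ℕ) (K : Set (Fin n → ℝ)) (hKne : K.Nonempty)
    (hKcomp : IsCompact K) (hKconv : Convex ℝ K)
    (ε : ℝ) (hε : 0 < ε) (η : ℝ) (hη : 0 < η)
    (f : (Fin n → ℝ) → ℝ)
    (hf : ∀ w : Fin n → ℝ, f w = sSup {x : ℝ | ∃ u ∈ K, x = ∑ j, w j * u j})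
    (t : Fin n → ℝ) :
    ∃ p : ℝ,
      IsLeast {x : ℝ | ∃ s : Fin n → ℝ,
        x = ε * sInf {d : ℝ | ∃ u ∈ K, d = ∑ j, |s j - u j|}
            + (1/(2*η)) * ∑ j, (s j - t j)^2} p ∧
      IsGreatest {x : ℝ | ∃ w : Fin n → ℝ, (∀ j, |w j| ≤ ε) ∧
        x = - f w + (∑ j, w j * t j) - (η/2) * ∑ j, (w j)^2} p := by
  have hf' : ∀ w, f w = sSup {x | ∃ u ∈ K, x = w ⬝ᵥ u} := hf
  obtain ⟨u₀, hu₀, hmin⟩ :=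
    hKcomp.exists_isMinOn hKne (continuous_maxLagrangian (ε := ε) (η := η) (t := t)).continuousOn
  set w₀ := bestResponse ε η t u₀
  have hw₀ : ∀ j, |w₀ j| ≤ ε := abs_bestResponse_le hε.le u₀
  have hmax : ∀ u ∈ K, w₀ ⬝ᵥ u ≤ w₀ ⬝ᵥ u₀ := fun u hu =>
    bestResponse_dotProduct_le_of_isMinOn hKconv hε.le hη hu₀ hmin hu
  refine ⟨maxLagrangian ε η t u₀, ⟨⟨t - η • w₀, le_antisymm ?_ ?_⟩, ?_⟩, ⟨⟨w₀, hw₀, ?_⟩, ?_⟩⟩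
  · exact lagrangian_le_primal hε hη hu₀ hw₀ hmax _
  · exact primal_le_maxLagrangian hε.le hη hu₀
  · rintro _ ⟨s, rfl⟩
    exact lagrangian_le_primal hε hη hu₀ hw₀ hmax s
  · change _ = -f w₀ + w₀ ⬝ᵥ t - _
    rw [hf', csSup_dotProduct_eq hu₀ hmax, maxLagrangian, lagrangian_eq]
    ring
  · rintro _ ⟨w, hw, rfl⟩
    change -f w + w ⬝ᵥ t - _ ≤ _
    have hsupp : w ⬝ᵥ u₀ ≤ f w := (hf' w).symm ▸ dotProduct_le_csSup hKcomp hu₀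
    have hle := lagrangian_le_maxLagrangian hη hw u₀ (t := t)
    rw [lagrangian_eq] at hle
    linarith
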